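/- For ξ = (θ, v₁, …, vₙ) ∈ ℝ^{3(n+1)} identified with se_n(3), the left Jacobian J(ad_{ξ^∧}) = Σ_{i≥0} (ad_{ξ^∧})^i/(i+1)! has lower-block-triangular form with diagonal blocks J(θ^∧) and first-block-column off-diagonal blocks Q_θ(v_i) = Σ_{n,m≥0} (θ^∧)^n v_i^∧ (θ^∧)^m /(n+m+2)!, and all other blocks zero. -/

import Mathlib

/-!
Read `ad_{ξ^∧}` as an `(n+1) × (n+1)` matrix of `3 × 3` blocks: `θ^∧` on the diagonal, `vₖ^∧` in
the first block column, zero elsewhere. Matrices of this shape form a subring; in the product the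
first-column blocks combine as `D C' + C D'`, so the `(k+1)`-st power has diagonal `(θ^∧)^(k+1)`
and first-column blocks `∑_{a+b=k} (θ^∧)^a vₖ^∧ (θ^∧)^b`. Summing `J` blockwise, the diagonal
gives `J(θ^∧)` and the first column gives the double series `Q_θ(vₖ)`, regrouped along the
antidiagonals `a + b = k`; all series converge absolutely because `1/(a+b+2)! ≤ 1/(a! b!)`.
-/

/-- The hat map on `ℝ³`. -/
def hat (θ : Fin 3 → ℝ) : Matrix (Fin 3) (Fin 3) ℝ :=
  !![0, -θ 2, θ 1; θ 2, 0, -θ 0; -θ 1, θ 0, 0]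

/-- The matrix representation of `ad_{ξ^∧}` for `ξ = (θ, v₁, …, vₙ)` identified with the
vector `ξ : Fin (n+1) × Fin 3 → ℝ` (`θ = ξ (0,·)`, `vₖ = ξ (k,·)` for `k ≠ 0`): block matrix
with diagonal blocks `θ^∧` and blocks `vₖ^∧` in positions `(k, 0)` of the first block column. -/
def adRep (n : ℕ) (ξ : Fin (n + 1) × Fin 3 → ℝ) :
    Matrix (Fin (n + 1) × Fin 3) (Fin (n + 1) × Fin 3) ℝ :=
  Matrix.of fun p q =>
    if p.1 = q.1 then hat (fun i => ξ (0, i)) p.2 q.2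
    else if q.1 = 0 then hat (fun i => ξ (p.1, i)) p.2 q.2
    else 0

/-- `J(M) = ∑_{k≥0} M^k/(k+1)!`. -/
noncomputable def Jmat {ι : Type*} [Fintype ι] [DecidableEq ι] (M : Matrix ι ι ℝ) :
    Matrix ι ι ℝ :=
  ∑' k : ℕ, (((k + 1).factorial : ℝ))⁻¹ • M ^ k

/-- `Q_θ(v) = ∑_{n,m ≥ 0} (θ^∧)^n v^∧ (θ^∧)^m / (n+m+2)!`. -/
noncomputable def Qmat (θ v : Fin 3 → ℝ) : Matrix (Fin 3) (Fin 3) ℝ :=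
  ∑' m : ℕ × ℕ, (((m.1 + m.2 + 2).factorial : ℝ))⁻¹ • (hat θ ^ m.1 * hat v * hat θ ^ m.2)

open Finset

section DiagColBlock

variable {ι A : Type*} [DecidableEq ι]

def diagColBlock [Zero A] (o : ι) (D : A) (C : ι → A) : Matrix ι ι A :=
  Matrix.of fun i j => if i = j then D else if j = o then C i else 0

theorem diagColBlock_one [Semiring A] (o : ι) : diagColBlock o (1 : A) 0 = 1 := by
  ext i j
  by_cases h : i = j <;> simp [diagColBlock, Matrix.one_apply, h]

theorem diagColBlock_sub [AddGroup A] (o : ι) (D D' : A) (C C' : ι → A) :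
    diagColBlock o D C - diagColBlock o D' C' = diagColBlock o (D - D') (C - C') := by
  ext i j
  simp only [diagColBlock, Matrix.sub_apply, Matrix.of_apply]
  split_ifs <;> simp

theorem smul_diagColBlock {R : Type*} [Zero A] [SMulZeroClass R A] (o : ι) (c : R) (D : A)
    (C : ι → A) : c • diagColBlock o D C = diagColBlock o (c • D) (c • C) := by
  ext i j
  simp only [diagColBlock, Matrix.smul_apply, Matrix.of_apply]
  split_ifs <;> simp

theorem diagColBlock_mul [Fintype ι] [Semiring A] (o : ι) (D D' : A) (C C' : ι → A) :
    diagColBlock o D C * diagColBlock o D' C' =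
      diagColBlock o (D * D') fun i => D * C' i + C i * D' := by
  ext i j
  simp only [Matrix.mul_apply, diagColBlock, Matrix.of_apply]
  by_cases hij : i = j
  · subst hij
    rw [sum_eq_single i (fun k _ hk => by split_ifs <;> simp_all) (by simp)]
    simp
  by_cases hj : j = o
  · subst hj
    rw [sum_eq_add i j hij (fun k _ hk => by split_ifs <;> simp_all) (by simp) (by simp)]
    simp [hij]
  · simp only [hij, hj, if_false]
    exact sum_eq_zero fun k _ => by split_ifs <;> simp_all

theorem diagColBlock_pow_succ [Fintype ι] [Semiring A] (o : ι) (D : A) (C : ι → A) (k : ℕ) :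
    diagColBlock o D C ^ (k + 1) =
      diagColBlock o (D ^ (k + 1)) fun i => ∑ ab ∈ antidiagonal k, D ^ ab.1 * C i * D ^ ab.2 := by
  induction k with
  | zero => simp
  | succ k ih =>
    rw [pow_succ', ih, diagColBlock_mul, ← pow_succ']
    congr 1
    ext i
    rw [Nat.sum_antidiagonal_succ, mul_sum, add_comm]
    simp [pow_succ', mul_assoc]

theorem HasSum.diagColBlock {κ : Type*} [AddCommMonoid A] [TopologicalSpace A] {o : ι}
    {D : κ → A} {C : κ → ι → A} {D₀ : A} {C₀ : ι → A} (hD : HasSum D D₀)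
    (hC : ∀ i, HasSum (fun k => C k i) (C₀ i)) :
    HasSum (fun k => diagColBlock o (D k) (C k)) (diagColBlock o D₀ C₀) := by
  refine Pi.hasSum.2 fun i => Pi.hasSum.2 fun j => ?_
  simp only [_root_.diagColBlock, Matrix.of_apply]
  split_ifs
  exacts [hD, hC i, hasSum_zero]

end DiagColBlock

theorem HasSum.sum_antidiagonal {M : Type*} [AddCommMonoid M] [TopologicalSpace M]
    [ContinuousAdd M] [RegularSpace M] {f : ℕ × ℕ → M} {a : M} (h : HasSum f a) :
    HasSum (fun n => ∑ kl ∈ antidiagonal n, f kl) a := by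
  have := (HasAntidiagonal.sigmaAntidiagonalEquivProd.hasSum_iff.2 h).sigma fun _ =>
    hasSum_fintype _
  simpa [sum_attach] using this

section NormedAlgebra

variable {𝔸 : Type*} [NormedRing 𝔸] [NormedAlgebra ℝ 𝔸] [CompleteSpace 𝔸]

theorem summable_inv_factorial_succ_smul_pow (x : 𝔸) :
    Summable fun k : ℕ => ((k + 1).factorial : ℝ)⁻¹ • x ^ k := by
  refine .of_norm_bounded (NormedSpace.norm_expSeries_summable' (𝕂 := ℝ) x) fun k => ?_
  rw [norm_smul, norm_smul, norm_inv, norm_inv, Real.norm_natCast, Real.norm_natCast]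
  gcongr
  omega

theorem summable_inv_factorial_add_add_two_smul_pow_mul_mul_pow (x y : 𝔸) :
    Summable fun m : ℕ × ℕ =>
      ((m.1 + m.2 + 2).factorial : ℝ)⁻¹ • (x ^ m.1 * y * x ^ m.2) := by
  have hexp := NormedSpace.norm_expSeries_summable' (𝕂 := ℝ) x
  have hprod : Summable fun m : ℕ × ℕ =>
      ‖(m.1.factorial : ℝ)⁻¹ • x ^ m.1‖ * (‖y‖ * ‖(m.2.factorial : ℝ)⁻¹ • x ^ m.2‖) :=
    .mul_of_nonneg hexp (hexp.mul_left ‖y‖) (fun _ => norm_nonneg _) fun _ => by positivity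
  refine .of_norm_bounded hprod fun ⟨a, b⟩ => ?_
  have hfac : (a.factorial : ℝ) * b.factorial ≤ (a + b + 2).factorial := by
    exact_mod_cast Nat.le_of_dvd (Nat.factorial_pos _)
      ((Nat.factorial_mul_factorial_dvd_factorial_add a b).trans
        (Nat.factorial_dvd_factorial (by omega)))
  calc ‖((a + b + 2).factorial : ℝ)⁻¹ • (x ^ a * y * x ^ b)‖
      ≤ ((a.factorial : ℝ) * b.factorial)⁻¹ * (‖x ^ a‖ * ‖y‖ * ‖x ^ b‖) := by
        rw [norm_smul, norm_inv, Real.norm_natCast]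
        gcongr
        exact norm_mul₃_le
    _ = _ := by
        simp only [norm_smul, norm_inv, Real.norm_natCast, mul_inv]
        ring

end NormedAlgebra

theorem hasSum_smul_diagColBlock_pow {ι A : Type*} [DecidableEq ι] [Fintype ι] [Ring A]
    [Module ℝ A] [TopologicalSpace A] [IsTopologicalAddGroup A] [T3Space A] (o : ι) (D : A)
    (C : ι → A) (hD : Summable fun k : ℕ => ((k + 1).factorial : ℝ)⁻¹ • D ^ k)
    (hC : ∀ i, Summable fun m : ℕ × ℕ =>
      ((m.1 + m.2 + 2).factorial : ℝ)⁻¹ • (D ^ m.1 * C i * D ^ m.2)) :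
    HasSum (fun k : ℕ => ((k + 1).factorial : ℝ)⁻¹ • diagColBlock o D C ^ k)
      (diagColBlock o (∑' k : ℕ, ((k + 1).factorial : ℝ)⁻¹ • D ^ k) fun i =>
        ∑' m : ℕ × ℕ, ((m.1 + m.2 + 2).factorial : ℝ)⁻¹ • (D ^ m.1 * C i * D ^ m.2)) := by
  have hD' := (hasSum_nat_add_iff' 1).2 hD.hasSum
  have hC' := fun i => (hC i).hasSum.sum_antidiagonal
  rw [← hasSum_nat_add_iff' 1]
  simp only [range_one, sum_singleton, pow_zero, zero_add, Nat.factorial_one, Nat.cast_one,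
    inv_one, one_smul] at hD' ⊢
  rw [← diagColBlock_one o, diagColBlock_sub, sub_zero]
  refine (hD'.diagColBlock hC').congr_fun fun k => ?_
  rw [diagColBlock_pow_succ, smul_diagColBlock]
  congr 1
  ext i : 1
  rw [Pi.smul_apply, smul_sum]
  refine sum_congr rfl fun m hm => ?_
  rw [mem_antidiagonal.1 hm]

theorem HasSum.matrix_comp {κ I J K L R : Type*} [AddCommMonoid R] [TopologicalSpace R]
    {f : κ → Matrix I J (Matrix K L R)} {a : Matrix I J (Matrix K L R)} (h : HasSum f a) :
    HasSum (fun k => Matrix.comp I J K L R (f k)) (Matrix.comp I J K L R a) :=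
  Pi.hasSum.2 fun p => Pi.hasSum.2 fun q =>
    Pi.hasSum.1 (Pi.hasSum.1 (Pi.hasSum.1 (Pi.hasSum.1 h p.1) q.1) p.2) q.2

theorem Jmat_comp_eq_of_hasSum {ι m : Type*} [Fintype ι] [DecidableEq ι] [Fintype m]
    [DecidableEq m] {M S : Matrix ι ι (Matrix m m ℝ)}
    (h : HasSum (fun k : ℕ => ((k + 1).factorial : ℝ)⁻¹ • M ^ k) S) :
    Jmat (Matrix.comp ι ι m m ℝ M) = Matrix.comp ι ι m m ℝ S := by
  rw [Jmat, ← h.matrix_comp.tsum_eq]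
  congr 1
  ext k : 1
  rw [← Matrix.compAlgEquiv_apply ι m ℝ ℝ, ← Matrix.compAlgEquiv_apply ι m ℝ ℝ, map_smul,
    map_pow]

theorem adRep_eq_comp (n : ℕ) (ξ : Fin (n + 1) × Fin 3 → ℝ) :
    adRep n ξ = Matrix.comp _ _ _ _ ℝ
      (diagColBlock 0 (hat fun i => ξ (0, i)) fun k => hat fun i => ξ (k, i)) := by
  ext p q
  simp only [adRep, diagColBlock, Matrix.comp_apply, Matrix.of_apply]
  split_ifs <;> rfl

/-- For `ξ = (θ, v₁, …, vₙ) ∈ se_n(3)`, the left Jacobian `J(ad_{ξ^∧})` is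
lower-block-triangular with diagonal blocks `J(θ^∧)`, first-block-column off-diagonal blocks
`Q_θ(vₖ)`, and all other blocks zero. -/
theorem left_jacobian_sen3_block_form (n : ℕ) (ξ : Fin (n + 1) × Fin 3 → ℝ) :
    Jmat (adRep n ξ)
      = Matrix.of fun p q =>
          if p.1 = q.1 then Jmat (hat fun i => ξ (0, i)) p.2 q.2
          else if q.1 = 0 then Qmat (fun i => ξ (0, i)) (fun i => ξ (p.1, i)) p.2 q.2
          else 0 := by
  let := Matrix.linftyOpNormedRing (n := Fin 3) (α := ℝ)
  let := Matrix.linftyOpNormedAlgebra (n := Fin 3) (R := ℝ) (α := ℝ)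
  have hblocks := hasSum_smul_diagColBlock_pow (0 : Fin (n + 1)) (hat fun i => ξ (0, i))
    (fun k => hat fun i => ξ (k, i)) (summable_inv_factorial_succ_smul_pow _)
    fun _ => summable_inv_factorial_add_add_two_smul_pow_mul_mul_pow _ _
  rw [adRep_eq_comp, Jmat_comp_eq_of_hasSum hblocks]
  ext p q
  simp only [diagColBlock, Matrix.comp_apply, Matrix.of_apply]
  split_ifs <;> rfl
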